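/- Given a right recollement (B, A, C, i_*, i^!, j^*, j_*) of abelian categories in which i^! is exact, for every object A of A the sequence 0 ⟶ i_* i^! A ⟶ A ⟶ j_* j^* A ⟶ 0 (counit followed by unit) is a short exact sequence. -/

import Mathlib

open CategoryTheory Limits

/-- A right recollement `(B, A, C, i_*, i^!, j^*, j_*)` of abelian categories:
`i_*` and `j^*` are exact, `i_*` and `j_*` are fully faithful, `(i_*, i^!)` and
`(j^*, j_*)` are adjoint pairs, and the essential image of `i_*` is the kernel of `j^*`. -/
structure RightRecollement (B A C : Type*) [Category B] [Category A] [Category C]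
    [Abelian B] [Abelian A] [Abelian C] where
  iStar : B ⥤ A
  iShriek : A ⥤ B
  jStar : A ⥤ C
  jLower : C ⥤ A
  iStar_preservesFiniteLimits : PreservesFiniteLimits iStar
  iStar_preservesFiniteColimits : PreservesFiniteColimits iStar
  jStar_preservesFiniteLimits : PreservesFiniteLimits jStar
  jStar_preservesFiniteColimits : PreservesFiniteColimits jStar
  iStar_full : iStar.Full
  iStar_faithful : iStar.Faithful
  jLower_full : jLower.Full
  jLower_faithful : jLower.Faithful
  adj_i : iStar ⊣ iShriek
  adj_j : jStar ⊣ jLower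
  im_eq_ker : ∀ X : A, (∃ Y : B, Nonempty (iStar.obj Y ≅ X)) ↔ IsZero (jStar.obj X)

/-! The functors `j^*` and `i^!` are exact and jointly detect zero objects: an object killed by
`j^*` is some `i_* Y`, and `Y ≅ i^! i_* Y`. So short exactness may be checked after applying both.
Since `j^* i_* = 0` and `j_*` is fully faithful, `j^*` turns the sequence into
`0 ⟶ j^* X ≅ j^* j_* j^* X`; since `i_*` is fully faithful and `i^! j_* = 0` (by adjunction,
`Hom (W, i^! j_* Z) = Hom (j^* i_* W, Z) = 0`), `i^!` turns it into `i^! i_* i^! X ≅ i^! X ⟶ 0`. -/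

namespace CategoryTheory.ShortComplex

section

variable {C : Type*} [Category C] [Preadditive C] [HasZeroObject C] {S : ShortComplex C}

lemma shortExact_of_isZero_X₁ (h : IsZero S.X₁) [IsIso S.g] : S.ShortExact where
  exact := (S.exact_iff_mono (h.eq_of_src _ _)).2 inferInstance
  mono_f := ⟨fun _ _ _ => h.eq_of_tgt _ _⟩

lemma shortExact_of_isZero_X₃ (h : IsZero S.X₃) [IsIso S.f] : S.ShortExact where
  exact := (S.exact_iff_epi (h.eq_of_tgt _ _)).2 inferInstance
  epi_g := ⟨fun _ _ _ => h.eq_of_src _ _⟩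

end

section

variable {A B C : Type*} [Category A] [Category B] [Category C] [Abelian A] [Abelian B] [Abelian C]
  (F : A ⥤ B) (G : A ⥤ C) [PreservesFiniteLimits F] [PreservesFiniteColimits F]
  [PreservesFiniteLimits G] [PreservesFiniteColimits G]

lemma ShortExact.of_map_of_map
    (hFG : ∀ X, IsZero (F.obj X) → IsZero (G.obj X) → IsZero X) {S : ShortComplex A}
    (hF : (S.map F).ShortExact) (hG : (S.map G).ShortExact) : S.ShortExact := by
  have := hF.mono_f; have := hG.mono_f; have := hF.epi_g; have := hG.epi_g
  exact
    { exact := S.exact_iff_isZero_homology.2 <| hFG _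
        (((S.map F).exact_iff_isZero_homology.1 hF.exact).of_iso (S.mapHomologyIso F).symm)
        (((S.map G).exact_iff_isZero_homology.1 hG.exact).of_iso (S.mapHomologyIso G).symm)
      mono_f := Preadditive.mono_of_isZero_kernel _ <| hFG _
        ((isZero_kernel_of_mono (S.map F).f).of_iso (PreservesKernel.iso F S.f))
        ((isZero_kernel_of_mono (S.map G).f).of_iso (PreservesKernel.iso G S.f))
      epi_g := Preadditive.epi_of_isZero_cokernel _ <| hFG _
        ((isZero_cokernel_of_epi (S.map F).g).of_iso (PreservesCokernel.iso F S.g))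
        ((isZero_cokernel_of_epi (S.map G).g).of_iso (PreservesCokernel.iso G S.g)) }

end

end CategoryTheory.ShortComplex

namespace RightRecollement

variable {B A C : Type*} [Category B] [Category A] [Category C] [Abelian B] [Abelian A] [Abelian C]
  (R : RightRecollement B A C)

attribute [local instance] iStar_full iStar_faithful jLower_full jLower_faithful
  jStar_preservesFiniteLimits jStar_preservesFiniteColimits

instance : R.iShriek.IsRightAdjoint := R.adj_i.isRightAdjoint

lemma isZero_jStar_obj_iStar_obj (Y : B) : IsZero (R.jStar.obj (R.iStar.obj Y)) :=
  (R.im_eq_ker _).1 ⟨Y, ⟨Iso.refl _⟩⟩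

lemma isZero_of_isZero_jStar_obj_of_isZero_iShriek_obj {X : A} (hj : IsZero (R.jStar.obj X))
    (hi : IsZero (R.iShriek.obj X)) : IsZero X := by
  obtain ⟨Y, ⟨e⟩⟩ := (R.im_eq_ker X).2 hj
  have hY : IsZero Y := hi.of_iso (asIso (R.adj_i.unit.app Y) ≪≫ R.iShriek.mapIso e)
  exact (R.iStar.map_isZero hY).of_iso e.symm

instance (Y : B) (Z : C) : Subsingleton (R.iStar.obj Y ⟶ R.jLower.obj Z) :=
  ⟨fun _ _ => (R.adj_j.homEquiv _ _).symm.injective ((R.isZero_jStar_obj_iStar_obj Y).eq_of_src _ _)⟩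

lemma isZero_iShriek_obj_jLower_obj (Z : C) : IsZero (R.iShriek.obj (R.jLower.obj Z)) := by
  rw [IsZero.iff_id_eq_zero]
  exact (R.adj_i.homEquiv _ _).symm.injective (Subsingleton.elim _ _)

lemma counit_app_comp_unit_app (X : A) : R.adj_i.counit.app X ≫ R.adj_j.unit.app X = 0 :=
  Subsingleton.elim (α := R.iStar.obj (R.iShriek.obj X) ⟶ R.jLower.obj (R.jStar.obj X)) _ _

noncomputable def counitUnitComplex (X : A) : ShortComplex A :=
  ShortComplex.mk _ _ (R.counit_app_comp_unit_app X)

lemma shortExact_counitUnitComplex_map_jStar (X : A) :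
    ((R.counitUnitComplex X).map R.jStar).ShortExact := by
  have : IsIso ((R.counitUnitComplex X).map R.jStar).g := by
    change IsIso (R.jStar.map (R.adj_j.unit.app X)); infer_instance
  exact ShortComplex.shortExact_of_isZero_X₁ (R.isZero_jStar_obj_iStar_obj _)

lemma shortExact_counitUnitComplex_map_iShriek (X : A) :
    ((R.counitUnitComplex X).map R.iShriek).ShortExact := by
  have : IsIso ((R.counitUnitComplex X).map R.iShriek).f := by
    change IsIso (R.iShriek.map (R.adj_i.counit.app X)); infer_instance
  exact ShortComplex.shortExact_of_isZero_X₃ (R.isZero_iShriek_obj_jLower_obj _)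

lemma shortExact_counitUnitComplex [PreservesFiniteColimits R.iShriek] (X : A) :
    (R.counitUnitComplex X).ShortExact :=
  .of_map_of_map R.jStar R.iShriek (fun _ => R.isZero_of_isZero_jStar_obj_of_isZero_iShriek_obj)
    (R.shortExact_counitUnitComplex_map_jStar X) (R.shortExact_counitUnitComplex_map_iShriek X)

end RightRecollement

theorem stmt6_general {B A C : Type*} [Category B] [Category A] [Category C]
    [Abelian B] [Abelian A] [Abelian C] (R : RightRecollement B A C)
    (h₂ : PreservesFiniteColimits R.iShriek)
    (X : A) :
    ∃ w : R.adj_i.counit.app X ≫ R.adj_j.unit.app X = 0,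
      (ShortComplex.mk (R.adj_i.counit.app X) (R.adj_j.unit.app X) w).ShortExact :=
  ⟨R.counit_app_comp_unit_app X, R.shortExact_counitUnitComplex X⟩

/-- if `i^!` is exact then for every `X` the counit-unit sequence
`0 ⟶ i_* i^! X ⟶ X ⟶ j_* j^* X ⟶ 0` is short exact. -/
theorem stmt6 {B A C : Type*} [Category B] [Category A] [Category C]
    [Abelian B] [Abelian A] [Abelian C] (R : RightRecollement B A C)
    (h₁ : PreservesFiniteLimits R.iShriek) (h₂ : PreservesFiniteColimits R.iShriek)
    (X : A) :
    ∃ w : R.adj_i.counit.app X ≫ R.adj_j.unit.app X = 0,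
      (ShortComplex.mk (R.adj_i.counit.app X) (R.adj_j.unit.app X) w).ShortExact :=
  stmt6_general R h₂ X
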